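/- Let p ≥ 2 and m ≥ 1 be integers, let a_1,…,a_p ∈ ℂ with no a_i a nonpositive integer, and let b_{j,k} ∈ ℂ for 1 ≤ j ≤ p−1, 1 ≤ k ≤ m with no b_{j,k} a nonpositive integer. For n ∈ ℕ^m set A_n = (∏_{i=1}^p (a_i)_{n_1+⋯+n_m}) / (∏_{k=1}^m (b_{1,k})_{n_k}⋯(b_{p−1,k})_{n_k}·n_k!). Then for every x ∈ ℂ^m with |x_1|^{1/p} + ⋯ + |x_m|^{1/p} > 1, the set {|A_n·x_1^{n_1}⋯x_m^{n_m}| : n ∈ ℕ^m} is unbounded; in particular the family (A_n x^n) is not summable. -/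

import Mathlib

/-!
Write `‖x k‖ = y k ^ p` and `S = ∑ k, y k > 1`. Up to factors polynomial in `N = ∑ k, n k`,
`‖(a)_N‖` is at least `N!` and `‖(b)_n‖` is at most `n!`, so `‖A n * x ^ n‖` is at least
`(N! / ∏ k, (n k)! * ∏ k, y k ^ n k) ^ p`, a multinomial term of `S ^ N` raised to the `p`-th power.
The largest of the at most `(N + 1) ^ m` terms of that expansion is at least `S ^ N / (N + 1) ^ m`,
so some term of the series is at least `S ^ (p * N)` divided by a polynomial in `N`.
-/

open scoped Nat
open Finset Filter Topology

lemma norm_ascPochhammer_eval_le (z : ℂ) {K : ℕ} (hz : ‖z‖ ≤ K) (n : ℕ) :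
    ‖(ascPochhammer ℂ n).eval z‖ ≤ n ! * ((n : ℝ) + 1) ^ K := by
  have h : ‖(ascPochhammer ℂ n).eval z‖ ≤ (K + 1).ascFactorial n := by
    induction n with
    | zero => simp
    | succ n ih =>
      rw [ascPochhammer_succ_eval, norm_mul, Nat.ascFactorial_succ, Nat.cast_mul, mul_comm]
      gcongr
      calc ‖z + n‖ ≤ ‖z‖ + n := by simpa using norm_add_le z n
        _ ≤ _ := by push_cast; linarith
  have hchoose : (K + 1).ascFactorial n ≤ n ! * (n + 1) ^ K := by
    rw [Nat.ascFactorial_eq_factorial_mul_choose, ← Nat.choose_symm_add, add_comm K n]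
    exact Nat.mul_le_mul_left _ (Nat.choose_add_le_add_one_pow n K)
  exact h.trans (by exact_mod_cast hchoose)

lemma ascPochhammer_eval_ne_zero {z : ℂ} (hz : ∀ n : ℕ, z ≠ -n) (N : ℕ) :
    (ascPochhammer ℂ N).eval z ≠ 0 := by
  rw [Ne, ascPochhammer_eval_eq_zero_iff]
  rintro ⟨k, -, hk⟩
  exact hz k (by rw [hk, neg_neg])

lemma factorial_le_norm_ascPochhammer_eval {w : ℂ} (hw : 1 ≤ w.re) (n : ℕ) :
    (n ! : ℝ) ≤ ‖(ascPochhammer ℂ n).eval w‖ := by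
  induction n with
  | zero => simp
  | succ n ih =>
    rw [ascPochhammer_succ_eval, norm_mul, Nat.factorial_succ, Nat.cast_mul, mul_comm]
    gcongr
    calc ((n + 1 : ℕ) : ℝ) ≤ (w + n).re := by
          simp only [Nat.cast_add, Nat.cast_one, Complex.add_re, Complex.natCast_re]; linarith
      _ ≤ ‖w + n‖ := Complex.re_le_norm _

lemma exists_factorial_le_norm_ascPochhammer_eval {z : ℂ} (hz : ∀ n : ℕ, z ≠ -n) :
    ∃ c > 0, ∃ L : ℕ, ∀ᶠ N in atTop,
      c * N ! ≤ ‖(ascPochhammer ℂ N).eval z‖ * ((N : ℝ) + 1) ^ L := by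
  -- With `Re (z + L) ≥ 1`, every factor of `(z + L)_M` has norm at least its index, so it is `≥ M!`.
  obtain ⟨L, hL⟩ := exists_nat_ge (1 - z.re)
  refine ⟨‖(ascPochhammer ℂ L).eval z‖, ?_, L, eventually_ge_atTop L |>.mono fun N hN => ?_⟩
  · exact norm_pos_iff.2 (ascPochhammer_eval_ne_zero hz L)
  obtain ⟨M, rfl⟩ := Nat.exists_eq_add_of_le hN
  have hsplit : (ascPochhammer ℂ (L + M)).eval z =
      (ascPochhammer ℂ L).eval z * (ascPochhammer ℂ M).eval (z + L) := by
    rw [← ascPochhammer_mul, Polynomial.eval_mul, Polynomial.eval_comp]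
    simp
  have hfac : (L + M) ! ≤ M ! * (L + M + 1) ^ L := by
    rw [← Nat.factorial_mul_descFactorial (Nat.le_add_right L M), Nat.add_sub_cancel_left]
    gcongr
    exact (Nat.descFactorial_le_pow _ _).trans (Nat.pow_le_pow_left (Nat.le_succ _) _)
  rw [hsplit, norm_mul, mul_assoc]
  gcongr
  calc ((L + M) ! : ℝ) ≤ M ! * ((L + M : ℕ) + 1 : ℝ) ^ L := by exact_mod_cast hfac
    _ ≤ _ := by
      gcongr
      exact factorial_le_norm_ascPochhammer_eval
        (by simp only [Complex.add_re, Complex.natCast_re]; linarith) M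

lemma exists_pow_factorial_le_prod_norm_ascPochhammer_eval {ι : Type*} [Fintype ι] {a : ι → ℂ}
    (ha : ∀ i, ∀ n : ℕ, a i ≠ -n) :
    ∃ c > 0, ∃ L : ℕ, ∀ᶠ N in atTop, c * (N ! : ℝ) ^ Fintype.card ι ≤
      (∏ i, ‖(ascPochhammer ℂ N).eval (a i)‖) * ((N : ℝ) + 1) ^ L := by
  choose c hc L hL using fun i => exists_factorial_le_norm_ascPochhammer_eval (ha i)
  refine ⟨∏ i, c i, prod_pos fun i _ => hc i, ∑ i, L i, ?_⟩
  filter_upwards [eventually_all.2 hL] with N hN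
  calc (∏ i, c i) * (N ! : ℝ) ^ Fintype.card ι = ∏ i, c i * N ! := by
        rw [prod_mul_distrib, prod_const, card_univ]
    _ ≤ ∏ i, ‖(ascPochhammer ℂ N).eval (a i)‖ * ((N : ℝ) + 1) ^ L i :=
        prod_le_prod (fun i _ => (mul_pos (hc i) (by positivity)).le) fun i _ => hN i
    _ = _ := by rw [prod_mul_distrib, prod_pow_eq_pow_sum]

lemma prod_prod_norm_ascPochhammer_eval_mul_factorial_le {ι κ : Type*} [Fintype ι] [Fintype κ]
    (b : ι → κ → ℂ) {K : ℕ} (hb : ∀ j k, ‖b j k‖ ≤ K) (n : κ → ℕ) :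
    ∏ k, ((∏ j, ‖(ascPochhammer ℂ (n k)).eval (b j k)‖) * (n k)!) ≤
      (∏ k, ((n k)! : ℝ)) ^ (Fintype.card ι + 1) *
        (((∑ k, n k : ℕ) : ℝ) + 1) ^ (K * Fintype.card ι * Fintype.card κ) := by
  calc ∏ k, ((∏ j, ‖(ascPochhammer ℂ (n k)).eval (b j k)‖) * (n k)!)
      ≤ ∏ k, (((n k)! : ℝ) ^ (Fintype.card ι + 1) *
          (((∑ k, n k : ℕ) : ℝ) + 1) ^ (K * Fintype.card ι)) := by
        refine prod_le_prod (fun k _ => by positivity) fun k _ => ?_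
        have hnk : (n k : ℝ) ≤ (∑ k, n k : ℕ) := by
          exact_mod_cast single_le_sum (fun _ _ => Nat.zero_le _) (mem_univ k)
        calc (∏ j, ‖(ascPochhammer ℂ (n k)).eval (b j k)‖) * (n k)!
            ≤ (∏ _j : ι, ((n k)! * ((n k : ℝ) + 1) ^ K)) * (n k)! := by
              gcongr with j
              exact norm_ascPochhammer_eval_le _ (hb j k) _
          _ = ((n k)! : ℝ) ^ (Fintype.card ι + 1) * ((n k : ℝ) + 1) ^ (K * Fintype.card ι) := by
              rw [prod_const, card_univ, mul_pow, ← pow_mul, pow_succ]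
              ring
          _ ≤ _ := by gcongr
    _ = _ := by rw [prod_mul_distrib, prod_pow, prod_const, card_univ, ← pow_mul]

lemma card_piAntidiag_univ_le {ι : Type*} [Fintype ι] [DecidableEq ι] (N : ℕ) :
    #(piAntidiag (univ : Finset ι) N) ≤ (N + 1) ^ Fintype.card ι := by
  calc #(piAntidiag (univ : Finset ι) N)
      ≤ #(Fintype.piFinset fun _ : ι => range (N + 1)) := by
        refine card_le_card fun n hn => Fintype.mem_piFinset.2 fun i => ?_
        rw [mem_range, Nat.lt_succ_iff, ← (mem_piAntidiag.1 hn).1]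
        exact single_le_sum (fun _ _ => Nat.zero_le _) (mem_univ i)
    _ = (N + 1) ^ Fintype.card ι := by simp

lemma exists_pow_sum_le_mul_multinomial {ι : Type*} [Fintype ι] [Nonempty ι] (y : ι → ℝ)
    (hy : ∀ i, 0 ≤ y i) (N : ℕ) :
    ∃ n : ι → ℕ, ∑ i, n i = N ∧ (∑ i, y i) ^ N ≤
      ((N : ℝ) + 1) ^ Fintype.card ι * (Nat.multinomial univ n * ∏ i, y i ^ n i) := by
  classical
  set s := piAntidiag (univ : Finset ι) N
  set g : (ι → ℕ) → ℝ := fun n => Nat.multinomial univ n * ∏ i, y i ^ n i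
  have hne : s.Nonempty := by
    obtain ⟨i⟩ := ‹Nonempty ι›
    exact ⟨Pi.single i N, by simp [s]⟩
  obtain ⟨n, hn, hmax⟩ := s.exists_max_image g hne
  refine ⟨n, (mem_piAntidiag.1 hn).1, ?_⟩
  calc (∑ i, y i) ^ N = ∑ n ∈ s, g n := sum_pow_eq_sum_piAntidiag _ _ _
    _ ≤ #s • g n := sum_le_card_nsmul _ _ _ hmax
    _ ≤ ((N : ℝ) + 1) ^ Fintype.card ι * g n := by
      rw [nsmul_eq_mul]
      gcongr
      · exact mul_nonneg (Nat.cast_nonneg _) (prod_nonneg fun i _ => pow_nonneg (hy i) _)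
      · exact_mod_cast card_piAntidiag_univ_le N

lemma not_bddAbove_of_eventually_exists_geometric_le {ι : Type*} {f : ι → ℝ} {C r : ℝ} {E : ℕ}
    (hC : 0 < C) (hr : 1 < r)
    (h : ∀ᶠ N : ℕ in atTop, ∃ i, C * r ^ N ≤ f i * ((N : ℝ) + 1) ^ E) :
    ¬ BddAbove (Set.range f) := by
  rintro ⟨M, hM⟩
  have hpoly : Tendsto (fun N : ℕ => M * ((N : ℝ) + 1) ^ E / r ^ N) atTop (𝓝 0) := by
    have := ((tendsto_pow_const_div_const_pow_of_one_lt E hr).comp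
      (tendsto_add_atTop_nat 1)).const_mul (M * r)
    rw [mul_zero] at this
    refine this.congr fun N => ?_
    simp only [Function.comp_apply, pow_succ, Nat.cast_succ]
    field_simp [(zero_lt_one.trans hr).ne']
  obtain ⟨N, hN, i, hi⟩ := ((hpoly.eventually_lt_const hC).and h).exists
  rw [div_lt_iff₀ (pow_pos (zero_lt_one.trans hr) N)] at hN
  exact hN.not_ge (hi.trans (mul_le_mul_of_nonneg_right (hM ⟨i, rfl⟩) (by positivity)))

noncomputable def lauricellaFCCoeff {p m : ℕ} (a : Fin p → ℂ) (b : Fin (p - 1) → Fin m → ℂ)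
    (n : Fin m → ℕ) : ℂ :=
  (∏ i, (ascPochhammer ℂ (∑ k, n k)).eval (a i)) /
    ∏ k, ((∏ j, (ascPochhammer ℂ (n k)).eval (b j k)) * ((n k)! : ℂ))

lemma mul_pow_multinomial_le_norm_lauricellaFCCoeff {p m : ℕ} (hp : 1 ≤ p) {a : Fin p → ℂ}
    {b : Fin (p - 1) → Fin m → ℂ} (hb : ∀ j k, ∀ n : ℕ, b j k ≠ -n) {K : ℕ}
    (hK : ∀ j k, ‖b j k‖ ≤ K) {x : Fin m → ℂ} {y : Fin m → ℝ} (hy : ∀ k, ‖x k‖ = y k ^ p)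
    {c : ℝ} {L : ℕ} (n : Fin m → ℕ)
    (hnum : c * ((∑ k, n k)! : ℝ) ^ p ≤
      (∏ i, ‖(ascPochhammer ℂ (∑ k, n k)).eval (a i)‖) * (((∑ k, n k : ℕ) : ℝ) + 1) ^ L) :
    c * (Nat.multinomial univ n * ∏ k, y k ^ n k) ^ p ≤
      ‖lauricellaFCCoeff a b n * ∏ k, x k ^ n k‖ *
        (((∑ k, n k : ℕ) : ℝ) + 1) ^ (L + K * (p - 1) * m) := by
  have hmult : (Nat.multinomial univ n : ℝ) * ∏ k, ((n k)! : ℝ) = (∑ k, n k)! := by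
    rw [mul_comm]; exact_mod_cast Nat.multinomial_spec univ n
  have hden_le := prod_prod_norm_ascPochhammer_eval_mul_factorial_le b hK n
  rw [Fintype.card_fin, Fintype.card_fin, Nat.sub_add_cancel hp] at hden_le
  set N := ∑ k, n k
  set num := ∏ i, ‖(ascPochhammer ℂ N).eval (a i)‖
  set den := ∏ k, ((∏ j, ‖(ascPochhammer ℂ (n k)).eval (b j k)‖) * ((n k)! : ℝ))
  set F := ∏ k, ((n k)! : ℝ)
  set P := ∏ k, y k ^ n k
  have hF : 0 < F := prod_pos fun k _ => Nat.cast_pos.2 (Nat.factorial_pos _)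
  have hden : 0 < den := prod_pos fun k _ => mul_pos
    (prod_pos fun j _ => norm_pos_iff.2 (ascPochhammer_eval_ne_zero (hb j k) _))
    (Nat.cast_pos.2 (Nat.factorial_pos _))
  have hP : P ^ p = ∏ k, ‖x k‖ ^ n k := by
    simp only [P, hy, ← prod_pow, ← pow_mul, mul_comm p]
  have hnorm : ‖lauricellaFCCoeff a b n * ∏ k, x k ^ n k‖ = num / den * P ^ p := by
    simp [lauricellaFCCoeff, norm_prod, hP, num, den, N]
  have hPp : 0 ≤ P ^ p := hP ▸ prod_nonneg fun k _ => by positivity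
  rw [hnorm]
  calc c * (Nat.multinomial univ n * P) ^ p = c * (N ! : ℝ) ^ p * P ^ p / F ^ p := by
        rw [← hmult]; field_simp; ring
    _ ≤ num * ((N : ℝ) + 1) ^ L * P ^ p / F ^ p := by gcongr
    _ = num / (F ^ p * ((N : ℝ) + 1) ^ (K * (p - 1) * m)) * P ^ p *
          ((N : ℝ) + 1) ^ (L + K * (p - 1) * m) := by
        field_simp; ring
    _ ≤ num / den * P ^ p * ((N : ℝ) + 1) ^ (L + K * (p - 1) * m) := by
        gcongr

lemma eventually_exists_geometric_le_norm_lauricellaFCCoeff {p m : ℕ} (hp : 1 ≤ p) (hm : 1 ≤ m)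
    {a : Fin p → ℂ} (ha : ∀ i, ∀ n : ℕ, a i ≠ -n) {b : Fin (p - 1) → Fin m → ℂ}
    (hb : ∀ j k, ∀ n : ℕ, b j k ≠ -n) {x : Fin m → ℂ} {y : Fin m → ℝ} (hy0 : ∀ k, 0 ≤ y k)
    (hy : ∀ k, ‖x k‖ = y k ^ p) :
    ∃ C > 0, ∃ E : ℕ, ∀ᶠ N : ℕ in atTop, ∃ n : Fin m → ℕ,
      C * ((∑ k, y k) ^ p) ^ N ≤
        ‖lauricellaFCCoeff a b n * ∏ k, x k ^ n k‖ * ((N : ℝ) + 1) ^ E := by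
  obtain ⟨c, hc, L, hL⟩ := exists_pow_factorial_le_prod_norm_ascPochhammer_eval ha
  obtain ⟨M, hM⟩ := (Set.finite_range fun jk : Fin (p - 1) × Fin m => ‖b jk.1 jk.2‖).bddAbove
  have hK : ∀ j k, ‖b j k‖ ≤ ⌈M⌉₊ := fun j k => (hM ⟨(j, k), rfl⟩).trans (Nat.le_ceil M)
  have : Nonempty (Fin m) := ⟨⟨0, hm⟩⟩
  refine ⟨c, hc, L + ⌈M⌉₊ * (p - 1) * m + m * p, ?_⟩
  filter_upwards [hL] with N hN
  obtain ⟨n, rfl, hsel⟩ := exists_pow_sum_le_mul_multinomial y hy0 N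
  refine ⟨n, ?_⟩
  rw [Fintype.card_fin] at hN hsel
  calc c * ((∑ k, y k) ^ p) ^ (∑ k, n k)
      = c * ((∑ k, y k) ^ (∑ k, n k)) ^ p := by rw [pow_right_comm]
    _ ≤ c * ((((∑ k, n k : ℕ) : ℝ) + 1) ^ m * (Nat.multinomial univ n * ∏ k, y k ^ n k)) ^ p := by
        gcongr
        exact pow_nonneg (sum_nonneg fun k _ => hy0 k) _
    _ = c * (Nat.multinomial univ n * ∏ k, y k ^ n k) ^ p *
          (((∑ k, n k : ℕ) : ℝ) + 1) ^ (m * p) := by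
        ring
    _ ≤ _ := by
        rw [pow_add _ (L + _), ← mul_assoc]
        gcongr ?_ * _
        exact mul_pow_multinomial_le_norm_lauricellaFCCoeff hp hb hK hy n hN

/-- divergence of the hypergeometric series `F_C^{p,m}(a,B;x)` outside the
closure of the convergence domain: if `|x_1|^{1/p} + ⋯ + |x_m|^{1/p} > 1` then the terms
are unbounded and the family is not summable. -/
theorem FCpm_diverges (p m : ℕ) (hp : 2 ≤ p) (hm : 1 ≤ m)
    (a : Fin p → ℂ) (ha : ∀ i, ∀ n : ℕ, a i ≠ -(n : ℂ))
    (b : Fin (p - 1) → Fin m → ℂ)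
    (hb : ∀ j k, ∀ n : ℕ, b j k ≠ -(n : ℂ))
    (A : (Fin m → ℕ) → ℂ)
    (hA : ∀ n : Fin m → ℕ,
      A n = (∏ i, (ascPochhammer ℂ (∑ k, n k)).eval (a i)) /
        (∏ k, ((∏ j, (ascPochhammer ℂ (n k)).eval (b j k)) * (Nat.factorial (n k) : ℂ))))
    (x : Fin m → ℂ)
    (hx : 1 < ∑ k, ‖x k‖ ^ ((p : ℝ)⁻¹)) :
    ¬ BddAbove (Set.range fun n : Fin m → ℕ => ‖A n * ∏ k, x k ^ n k‖) ∧
      ¬ Summable (fun n : Fin m → ℕ => A n * ∏ k, x k ^ n k) := by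
  obtain rfl : A = lauricellaFCCoeff a b := funext hA
  have hy : ∀ k, ‖x k‖ = (‖x k‖ ^ (p : ℝ)⁻¹) ^ p := fun k =>
    (Real.rpow_inv_natCast_pow (norm_nonneg _) (by omega)).symm
  obtain ⟨C, hC, E, hE⟩ := eventually_exists_geometric_le_norm_lauricellaFCCoeff (by omega) hm ha hb
    (fun k => by positivity) hy
  have hunbdd := not_bddAbove_of_eventually_exists_geometric_le hC (one_lt_pow₀ hx (by omega)) hE
  exact ⟨hunbdd, fun hs => hunbdd hs.tendsto_cofinite_zero.norm.bddAbove_range_of_cofinite⟩
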